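/- For all (a,b) ∈ ℝ² one has Φ₁(a,−b) = Φ₁(a,b) and Φ₂(a,b) + Φ₂(a,−b) = 2·𝒴*(Φ₁(a,b)); moreover 0 < Φ₂(a,b) < 2·𝒴*(Φ₁(a,b)) for every (a,b) ∈ ℝ². -/

import Mathlib

/-!
`Ψ₁` is the inverse of the decreasing bijection `u ↦ -(u³ + u)`, hence continuous, and
`Y² = Ψ₁(Y)²(1 + Ψ₁(Y)²)² ≤ (1 + Ψ₁(Y)²)³`. So for fixed `X` the integrand
`f(t) = 1/(1 + 3Ψ₁(p*(X - t²))²)` is positive, even, continuous and `O((1 + t²)^{-2/3})`, in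
particular integrable. Since `Φ₁` depends on `b` only through `b²`, `Φ₂(a, ±b) = ∫_{-∞}^{±b} f`
with the same `X = Φ₁(a, b)`; by evenness `∫_{-∞}^{-b} f = ∫_b^∞ f`, so the sum is
`∫_ℝ f = 2𝒴*(X)`, and positivity of `f` makes both summands positive.
-/

noncomputable section

open Real MeasureTheory

/-- The real cube root. -/
def cbrt (x : ℝ) : ℝ := Real.sign x * |x| ^ ((1 : ℝ) / 3)

/-- The profile `Ψ₁`, inverse of `X ↦ -X - X³`. -/
def Psi1 (X : ℝ) : ℝ :=
  cbrt (-X / 2 + Real.sqrt (1 / 27 + X ^ 2 / 4)) +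
    cbrt (-X / 2 - Real.sqrt (1 / 27 + X ^ 2 / 4))

/-- The normalising constant `p* = (4/(9π³))·Γ(1/4)⁴`. -/
def pStar : ℝ := (4 / (9 * π ^ 3)) * Real.Gamma (1 / 4) ^ 4

/-- The displacement curve `𝒴*(X) = ∫₀^∞ db / (1 + 3Ψ₁(p*(X - b²))²)`. -/
def Ystar (X : ℝ) : ℝ :=
  ∫ b in Set.Ioi (0 : ℝ), 1 / (1 + 3 * (Psi1 (pStar * (X - b ^ 2))) ^ 2)

/-- The map `Φ(a,b) = (a + b² + p*²a³, ∫_{-∞}^b db̃/(1 + 3Ψ₁(p*(a + p*²a³ + b² - b̃²))²))`. -/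
def Phi (p : ℝ × ℝ) : ℝ × ℝ :=
  (p.1 + p.2 ^ 2 + pStar ^ 2 * p.1 ^ 3,
    ∫ t in Set.Iio p.2,
      1 / (1 + 3 * (Psi1 (pStar * (p.1 + pStar ^ 2 * p.1 ^ 3 + p.2 ^ 2 - t ^ 2))) ^ 2))

open Set

lemma cbrt_pow_three (x : ℝ) : cbrt x ^ 3 = x := by
  have h : (|x| ^ ((1 : ℝ) / 3)) ^ 3 = |x| := by
    rw [← Real.rpow_natCast, ← Real.rpow_mul (abs_nonneg x)]
    norm_num
  rw [cbrt, mul_pow, h]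
  rcases lt_trichotomy x 0 with hx | rfl | hx
  · rw [Real.sign_of_neg hx, abs_of_neg hx]; ring
  · simp
  · rw [Real.sign_of_pos hx, abs_of_pos hx]; ring

lemma strictMono_pow_three_add_self : StrictMono fun u : ℝ ↦ u ^ 3 + u :=
  (Odd.strictMono_pow (R := ℝ) (n := 3) (by decide)).add strictMono_id

/-- `Ψ₁` is Cardano's formula for the real root of this cubic. -/
lemma Psi1_pow_three_add_self (Y : ℝ) : Psi1 Y ^ 3 + Psi1 Y = -Y := by
  set s := √(1 / 27 + Y ^ 2 / 4)
  have hs : s ^ 2 = 1 / 27 + Y ^ 2 / 4 := Real.sq_sqrt (by positivity)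
  set A := cbrt (-Y / 2 + s)
  set B := cbrt (-Y / 2 - s)
  have hA : A ^ 3 = -Y / 2 + s := cbrt_pow_three _
  have hB : B ^ 3 = -Y / 2 - s := cbrt_pow_three _
  have hAB : A * B = -(1 / 3) := (Odd.strictMono_pow (R := ℝ) (n := 3) (by decide)).injective <| by
    rw [mul_pow, hA, hB]; nlinarith
  calc (A + B) ^ 3 + (A + B) = A ^ 3 + B ^ 3 + (3 * (A * B) + 1) * (A + B) := by ring
    _ = -Y := by rw [hA, hB, hAB]; ring

lemma Psi1_eq_iff {Y u : ℝ} : Psi1 Y = u ↔ u ^ 3 + u = -Y :=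
  ⟨fun h ↦ h ▸ Psi1_pow_three_add_self Y,
    fun h ↦ strictMono_pow_three_add_self.injective (h ▸ Psi1_pow_three_add_self Y)⟩

lemma antitone_Psi1 : Antitone Psi1 := fun Y Y' h ↦
  strictMono_pow_three_add_self.le_iff_le.mp <| by
    simp only [Psi1_pow_three_add_self]; linarith

lemma continuous_Psi1 : Continuous Psi1 := by
  have hmono : Monotone fun Y ↦ Psi1 (-Y) := fun _ _ h ↦ antitone_Psi1 (neg_le_neg h)
  have hsurj : Function.Surjective fun Y ↦ Psi1 (-Y) :=
    fun u ↦ ⟨u ^ 3 + u, Psi1_eq_iff.mpr (neg_neg _).symm⟩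
  simpa [Function.comp_def] using (hmono.continuous_of_surjective hsurj).comp continuous_neg

/-- `Ψ₁` grows like `|Y|^{1/3}`. -/
lemma sq_le_one_add_Psi1_sq_pow_three (Y : ℝ) : Y ^ 2 ≤ (1 + Psi1 Y ^ 2) ^ 3 := by
  have h := Psi1_pow_three_add_self Y
  have hY : Y ^ 2 = Psi1 Y ^ 2 * (1 + Psi1 Y ^ 2) ^ 2 := by
    rw [← neg_sq, ← h]; ring
  rw [hY]
  nlinarith [sq_nonneg (1 + Psi1 Y ^ 2), sq_nonneg (Psi1 Y)]

def ystarIntegrand (c X t : ℝ) : ℝ := 1 / (1 + 3 * Psi1 (c * (X - t ^ 2)) ^ 2)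

lemma ystarIntegrand_pos (c X t : ℝ) : 0 < ystarIntegrand c X t := by
  unfold ystarIntegrand; positivity

lemma ystarIntegrand_neg (c X t : ℝ) : ystarIntegrand c X (-t) = ystarIntegrand c X t := by
  simp only [ystarIntegrand, neg_sq]

lemma continuous_ystarIntegrand (c X : ℝ) : Continuous (ystarIntegrand c X) := by
  have := continuous_Psi1
  exact continuous_const.div (by fun_prop) fun t ↦ by positivity

lemma one_add_sq_sq_le {c : ℝ} (hc : 0 < c) (X t : ℝ) :
    (1 + t ^ 2) ^ 2 ≤ 2 * ((1 + |X|) ^ 2 + 1 / c ^ 2) * (1 + (c * (X - t ^ 2)) ^ 2) := by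
  set d := t ^ 2 - X
  have hd : 1 + t ^ 2 ≤ (1 + |X|) + |d| := by
    linarith [le_abs_self X, le_abs_self d]
  have hc2 : 1 / c ^ 2 * (c * d) ^ 2 = d ^ 2 := by field_simp
  have hsq : (c * (X - t ^ 2)) ^ 2 = (c * d) ^ 2 := by ring
  rw [hsq]
  nlinarith [sq_abs d, abs_nonneg d, abs_nonneg X, sq_nonneg (1 + |X| - |d|),
    mul_nonneg (sq_nonneg (1 + |X|)) (sq_nonneg (c * d)),
    (by positivity : (0 : ℝ) ≤ 1 / c ^ 2)]

lemma ystarIntegrand_le_rpow {c : ℝ} (hc : 0 < c) (X t : ℝ) :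
    ystarIntegrand c X t ≤
      (4 * ((1 + |X|) ^ 2 + 1 / c ^ 2)) ^ (1 / 3 : ℝ) * (1 + t ^ 2) ^ (-(2 / 3) : ℝ) := by
  set M := 4 * ((1 + |X|) ^ 2 + 1 / c ^ 2)
  set A := 1 + t ^ 2
  set B := 1 + Psi1 (c * (X - t ^ 2)) ^ 2
  have hA : 0 < A := by positivity
  have hB : 1 ≤ B := le_add_of_nonneg_right (sq_nonneg _)
  have hAB : A ^ 2 ≤ M * B ^ 3 := by
    have hY := sq_le_one_add_Psi1_sq_pow_three (c * (X - t ^ 2))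
    have hB3 : 1 ≤ B ^ 3 := one_le_pow₀ hB
    calc A ^ 2 ≤ 2 * ((1 + |X|) ^ 2 + 1 / c ^ 2) * (1 + (c * (X - t ^ 2)) ^ 2) :=
          one_add_sq_sq_le hc X t
      _ ≤ 2 * ((1 + |X|) ^ 2 + 1 / c ^ 2) * (2 * B ^ 3) := by gcongr; linarith
      _ = M * B ^ 3 := by ring
  have hroot : A ^ (2 / 3 : ℝ) ≤ M ^ (1 / 3 : ℝ) * B := by
    have hcube : ∀ x : ℝ, 0 ≤ x → (x ^ 3) ^ (1 / 3 : ℝ) = x := fun x hx ↦ by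
      simpa using Real.pow_rpow_inv_natCast hx (n := 3) (by norm_num)
    calc A ^ (2 / 3 : ℝ) = (A ^ 2) ^ (1 / 3 : ℝ) := by
          rw [← Real.rpow_natCast, ← Real.rpow_mul hA.le]; norm_num
      _ ≤ (M * B ^ 3) ^ (1 / 3 : ℝ) := by gcongr
      _ = M ^ (1 / 3 : ℝ) * B := by
          rw [Real.mul_rpow (by positivity) (by positivity), hcube B (by linarith)]
  calc ystarIntegrand c X t ≤ B⁻¹ := by
        rw [ystarIntegrand, one_div]
        gcongr
        linarith [sq_nonneg (Psi1 (c * (X - t ^ 2)))]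
    _ ≤ M ^ (1 / 3 : ℝ) * (A ^ (2 / 3 : ℝ))⁻¹ := by
        rw [← div_eq_mul_inv, le_div_iff₀ (by positivity), ← div_eq_inv_mul,
          div_le_iff₀ (by linarith)]
        exact hroot
    _ = M ^ (1 / 3 : ℝ) * A ^ (-(2 / 3) : ℝ) := by rw [Real.rpow_neg hA.le]

lemma integrable_ystarIntegrand {c : ℝ} (hc : 0 < c) (X : ℝ) :
    Integrable (ystarIntegrand c X) := by
  have hmajorant : Integrable fun t : ℝ ↦ (1 + ‖t‖ ^ 2) ^ (-(4 / 3) / 2 : ℝ) :=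
    integrable_rpow_neg_one_add_norm_sq (by norm_num)
  refine (hmajorant.const_mul ((4 * ((1 + |X|) ^ 2 + 1 / c ^ 2)) ^ (1 / 3 : ℝ))).mono'
    (continuous_ystarIntegrand c X).aestronglyMeasurable (.of_forall fun t ↦ ?_)
  rw [Real.norm_of_nonneg (ystarIntegrand_pos c X t).le, Real.norm_eq_abs, sq_abs]
  convert ystarIntegrand_le_rpow hc X t using 3
  norm_num

lemma setIntegral_Iio_add_setIntegral_Iio_neg {f : ℝ → ℝ} (hf : Integrable f)
    (heven : ∀ t, f (-t) = f t) (b : ℝ) :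
    (∫ t in Iio b, f t) + ∫ t in Iio (-b), f t = 2 * ∫ t in Ioi 0, f t := by
  have hreflect : ∫ t in Iio (-b), f t = ∫ t in Ici b, f t := by
    rw [← integral_Iic_eq_integral_Iio, ← integral_comp_neg_Ioi, integral_Ici_eq_integral_Ioi]
    simp only [heven]
  have habs : ∫ t, f t = ∫ t, f |t| := by
    congr 1 with t
    rcases abs_choice t with h | h <;> simp only [h, heven]
  rw [hreflect, intervalIntegral.integral_Iio_add_Ici hf.integrableOn hf.integrableOn, habs,
    integral_comp_abs]

lemma setIntegral_pos_of_pos {f : ℝ → ℝ} {s : Set ℝ} (hf : IntegrableOn f s)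
    (hpos : ∀ t, 0 < f t) (hs : 0 < volume s) : 0 < ∫ t in s, f t := by
  rw [setIntegral_pos_iff_support_of_nonneg_ae (.of_forall fun t ↦ (hpos t).le) hf]
  simpa [Function.support, (hpos _).ne'] using hs

lemma pStar_pos : 0 < pStar := by
  have := Real.Gamma_pos_of_pos (by norm_num : (0 : ℝ) < 1 / 4)
  unfold pStar; positivity

lemma Phi_fst_neg (a b : ℝ) : (Phi (a, -b)).1 = (Phi (a, b)).1 := by
  simp [Phi]

lemma Phi_snd_eq (a b : ℝ) :
    (Phi (a, b)).2 = ∫ t in Iio b, ystarIntegrand pStar (Phi (a, b)).1 t := by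
  simp only [Phi, ystarIntegrand]
  congr 1 with t
  ring_nf

lemma Ystar_eq (X : ℝ) : Ystar X = ∫ t in Ioi 0, ystarIntegrand pStar X t := rfl

/-- The symmetries `Φ₁(a,-b) = Φ₁(a,b)`, `Φ₂(a,b) + Φ₂(a,-b) = 2𝒴*(Φ₁(a,b))`, and
`0 < Φ₂(a,b) < 2𝒴*(Φ₁(a,b))`. -/
theorem Phi_symmetry :
    ∀ a b : ℝ,
      (Phi (a, -b)).1 = (Phi (a, b)).1 ∧
      (Phi (a, b)).2 + (Phi (a, -b)).2 = 2 * Ystar ((Phi (a, b)).1) ∧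
      0 < (Phi (a, b)).2 ∧ (Phi (a, b)).2 < 2 * Ystar ((Phi (a, b)).1) := by
  intro a b
  set f := ystarIntegrand pStar (Phi (a, b)).1
  have hf : Integrable f := integrable_ystarIntegrand pStar_pos _
  have hPhi₂ : (Phi (a, b)).2 = ∫ t in Iio b, f t := Phi_snd_eq a b
  have hPhi₂_neg : (Phi (a, -b)).2 = ∫ t in Iio (-b), f t := by
    rw [Phi_snd_eq, Phi_fst_neg]
  have hsum : (Phi (a, b)).2 + (Phi (a, -b)).2 = 2 * Ystar (Phi (a, b)).1 := by
    rw [hPhi₂, hPhi₂_neg, Ystar_eq]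
    exact setIntegral_Iio_add_setIntegral_Iio_neg hf (ystarIntegrand_neg _ _) b
  have hpos : ∀ b', 0 < ∫ t in Iio b', f t := fun b' ↦
    setIntegral_pos_of_pos hf.integrableOn (ystarIntegrand_pos _ _) (by simp)
  refine ⟨Phi_fst_neg a b, hsum, hPhi₂ ▸ hpos b, ?_⟩
  linarith [hpos (-b)]
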